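/- arXiv:2212.06213 — 3 statements merged into one kernel-verified Lean document; each statement's English description precedes it below -/
import Mathlib

section
/- Let q ∈ ℚ ∩ (0,1) with 1/q ∉ ℕ, and let Sq = ⟨qⁿ : n ∈ ℕ₀⟩ ⊆ ℚ≥0. Then Sq does not satisfy ACCP: writing q = n(q)/d(q) in lowest terms, the chain of principal ideals (d(q)qⁿ + Sq)ₙ is ascending and does not stabilize. -/
def cosetQ (G : AddSubmonoid ℚ) (b : ℚ) : Set ℚ := {x | ∃ c ∈ G, x = b + c}

def ACCPQat (G : AddSubmonoid ℚ) (b : ℚ) : Prop :=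
  ∀ f : ℕ → ℚ, f 0 = b → (∀ n, f n ∈ G) →
    (∀ n, cosetQ G (f n) ⊆ cosetQ G (f (n + 1))) →
      ∃ N, ∀ n, N ≤ n → cosetQ G (f n) = cosetQ G (f N)

def ACCPQ (G : AddSubmonoid ℚ) : Prop := ∀ b ∈ G, ACCPQat G b

/-! Write `q = m / d` in lowest terms. Then `d qⁿ = d qⁿ⁺¹ + (d - m) qⁿ` with `(d - m) qⁿ ∈ S_q`, so
the principal ideals `d qⁿ + S_q` increase with `n`. They never stabilize: `S_q` consists of
nonnegative rationals, so `a + S_q ⊆ b + S_q` forces `b ≤ a`, while `d qⁿ` strictly decreases. -/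

section cosetQ

variable {G : AddSubmonoid ℚ}

theorem mem_cosetQ_self (b : ℚ) : b ∈ cosetQ G b :=
  ⟨0, G.zero_mem, (add_zero b).symm⟩

theorem cosetQ_subset_cosetQ_of_sub_mem {a b : ℚ} (h : a - b ∈ G) :
    cosetQ G a ⊆ cosetQ G b := by
  rintro x ⟨c, hc, rfl⟩
  exact ⟨a - b + c, G.add_mem h hc, by ring⟩

theorem le_of_cosetQ_subset (hG : ∀ x ∈ G, 0 ≤ x) {a b : ℚ} (h : cosetQ G a ⊆ cosetQ G b) :
    b ≤ a := by
  obtain ⟨c, hc, hac⟩ := h (mem_cosetQ_self a)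
  linarith [hG c hc]

theorem cosetQ_ne_of_lt (hG : ∀ x ∈ G, 0 ≤ x) {a b : ℚ} (hab : a < b) :
    cosetQ G a ≠ cosetQ G b :=
  fun h ↦ hab.not_ge (le_of_cosetQ_subset hG h.le)

theorem not_ACCPQ_of_not_stabilizes (f : ℕ → ℚ) (hmem : ∀ n, f n ∈ G)
    (hchain : ∀ n, cosetQ G (f n) ⊆ cosetQ G (f (n + 1)))
    (hne : ∀ N, ∃ n, N ≤ n ∧ cosetQ G (f n) ≠ cosetQ G (f N)) : ¬ ACCPQ G := by
  intro hacc
  obtain ⟨N, hN⟩ := hacc (f 0) (hmem 0) f rfl hmem hchain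
  obtain ⟨n, hn, hne⟩ := hne N
  exact hne (hN n hn)

end cosetQ

theorem nonneg_of_mem_closure {s : Set ℚ} (hs : ∀ x ∈ s, 0 ≤ x) {x : ℚ}
    (hx : x ∈ AddSubmonoid.closure s) : 0 ≤ x :=
  AddSubmonoid.closure_le (S := (Subsemiring.nonneg ℚ).toAddSubmonoid) |>.mpr hs hx

theorem natAbs_num_lt_den {q : ℚ} (h0 : 0 < q) (h1 : q < 1) : q.num.natAbs < q.den := by
  have := Rat.num_pos.mpr h0
  have := Rat.num_lt_denom_iff.mpr h1
  omega

theorem den_mul_pow_sub_den_mul_pow_succ {q : ℚ} (h0 : 0 < q) (h1 : q < 1) (n : ℕ) :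
    (q.den : ℚ) * q ^ n - q.den * q ^ (n + 1) = (q.den - q.num.natAbs : ℕ) • q ^ n := by
  have hnum : (q.num.natAbs : ℚ) = q * q.den := by
    rw [Rat.mul_den_eq_num, Nat.cast_natAbs, abs_of_pos (Rat.num_pos.mpr h0)]
  rw [nsmul_eq_mul, Nat.cast_sub (natAbs_num_lt_den h0 h1).le, hnum]
  ring

theorem stmt6_general (q : ℚ) (h0 : 0 < q) (h1 : q < 1)
    (S : AddSubmonoid ℚ)
    (hS : S = AddSubmonoid.closure {x : ℚ | ∃ n : ℕ, x = q ^ n}) :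
    (∀ n : ℕ, (q.den : ℚ) * q ^ n ∈ S) ∧
    (∀ n : ℕ, cosetQ S ((q.den : ℚ) * q ^ n) ⊆ cosetQ S ((q.den : ℚ) * q ^ (n + 1))) ∧
    (∀ N : ℕ, ∃ n : ℕ, N ≤ n ∧
      cosetQ S ((q.den : ℚ) * q ^ n) ≠ cosetQ S ((q.den : ℚ) * q ^ N)) ∧
    ¬ ACCPQ S := by
  have hpow (n : ℕ) : q ^ n ∈ S := hS ▸ AddSubmonoid.subset_closure ⟨n, rfl⟩
  have hnonneg : ∀ x ∈ S, 0 ≤ x := hS ▸ fun x ↦ nonneg_of_mem_closure (by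
    rintro _ ⟨n, rfl⟩
    positivity)
  have hmem (n : ℕ) : (q.den : ℚ) * q ^ n ∈ S := by
    simpa only [nsmul_eq_mul] using S.nsmul_mem (hpow n) q.den
  have hchain (n : ℕ) :
      cosetQ S ((q.den : ℚ) * q ^ n) ⊆ cosetQ S ((q.den : ℚ) * q ^ (n + 1)) := by
    apply cosetQ_subset_cosetQ_of_sub_mem
    rw [den_mul_pow_sub_den_mul_pow_succ h0 h1]
    exact S.nsmul_mem (hpow n) _
  have hne (N : ℕ) : ∃ n, N ≤ n ∧
      cosetQ S ((q.den : ℚ) * q ^ n) ≠ cosetQ S ((q.den : ℚ) * q ^ N) := by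
    refine ⟨N + 1, N.le_succ, cosetQ_ne_of_lt hnonneg ?_⟩
    exact mul_lt_mul_of_pos_left (pow_lt_pow_right_of_lt_one₀ h0 h1 N.lt_succ_self) (by positivity)
  exact ⟨hmem, hchain, hne, not_ACCPQ_of_not_stabilizes _ hmem hchain hne⟩

theorem stmt6 (q : ℚ) (h0 : 0 < q) (h1 : q < 1) (hnotrec : ∀ n : ℕ, 1 / q ≠ (n : ℚ))
    (S : AddSubmonoid ℚ)
    (hS : S = AddSubmonoid.closure {x : ℚ | ∃ n : ℕ, x = q ^ n}) :
    (∀ n : ℕ, (q.den : ℚ) * q ^ n ∈ S) ∧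
    (∀ n : ℕ, cosetQ S ((q.den : ℚ) * q ^ n) ⊆ cosetQ S ((q.den : ℚ) * q ^ (n + 1))) ∧
    (∀ N : ℕ, ∃ n : ℕ, N ≤ n ∧
      cosetQ S ((q.den : ℚ) * q ^ n) ≠ cosetQ S ((q.den : ℚ) * q ^ N)) ∧
    ¬ ACCPQ S :=
  stmt6_general q h0 h1 S hS
end

section
/- Let (pₙ) be the increasing enumeration of the primes with qₙ = pₙpₙ₊₂ and M = ⟨1/qₙ : n ∈ ℕ⟩. Then for every n ∈ ℕ, 1/pₙ₊₂ divides 1/pₙ in M; consequently the ascending chains of principal ideals (1/p₂ₙ₋₁ + M)ₙ and (1/p₂ₙ + M)ₙ starting at 1/2 + M and 1/3 + M respectively do not stabilize, so neither 1/2 nor 1/3 satisfies ACCP in M. -/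
/-!
Writing `p n` for `nthPrime n`: since `p n < p (n + 2)`, the identity
`1 / p n = 1 / p (n + 2) + (p (n + 2) - p n) • (1 / (p n * p (n + 2)))`
exhibits `1 / p (n + 2)` as a proper divisor of `1 / p n` in `Mq`. As `Mq ⊆ ℚ≥0` has no nonzero
units, distinct elements generate distinct principal ideals, so stepping through every other prime
gives strictly ascending chains starting at `1 / 2` and `1 / 3`.
-/

noncomputable def nthPrime (n : ℕ) : ℕ := Nat.nth Nat.Prime n

noncomputable def Mq : AddSubmonoid ℚ :=
  AddSubmonoid.closure {x : ℚ | ∃ n : ℕ, x = 1 / ((nthPrime n : ℚ) * (nthPrime (n + 2) : ℚ))}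

section Coset

variable {G : AddSubmonoid ℚ}

lemma cosetQ_add_subset {a c : ℚ} (hc : c ∈ G) : cosetQ G (a + c) ⊆ cosetQ G a := by
  rintro x ⟨d, hd, rfl⟩
  exact ⟨c + d, G.add_mem hc hd, by ring⟩

lemma self_mem_cosetQ (a : ℚ) : a ∈ cosetQ G a := ⟨0, G.zero_mem, (add_zero a).symm⟩

lemma cosetQ_injective (hG : ∀ x ∈ G, 0 ≤ x) : Function.Injective (cosetQ G) := by
  intro a b hab
  obtain ⟨c, hc, rfl⟩ : a ∈ cosetQ G b := hab ▸ self_mem_cosetQ a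
  obtain ⟨d, hd, hbd⟩ : b ∈ cosetQ G (b + c) := hab ▸ self_mem_cosetQ b
  have hc0 : c = 0 := by linarith [hG c hc, hG d hd]
  rw [hc0, add_zero]

lemma not_ACCPQat_of_strictChain {f : ℕ → ℚ} (hmem : ∀ n, f n ∈ G)
    (hsub : ∀ n, cosetQ G (f n) ⊆ cosetQ G (f (n + 1)))
    (hne : ∀ n, cosetQ G (f n) ≠ cosetQ G (f (n + 1))) : ¬ ACCPQat G (f 0) := by
  intro h
  obtain ⟨N, hN⟩ := h f rfl hmem hsub
  exact hne N (hN (N + 1) N.le_succ).symm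

end Coset

lemma nthPrime_strictMono : StrictMono nthPrime :=
  Nat.nth_strictMono Nat.infinite_setOfPred_prime

lemma nthPrime_pos (n : ℕ) : 0 < (nthPrime n : ℚ) := by
  exact_mod_cast (Nat.nth_mem_of_infinite Nat.infinite_setOfPred_prime n : (nthPrime n).Prime).pos

lemma nthPrime_zero : nthPrime 0 = 2 := Nat.nth_prime_zero_eq_two

lemma nthPrime_one : nthPrime 1 = 3 := Nat.nth_prime_one_eq_three

lemma one_div_mul_nthPrime_mem_Mq (n : ℕ) :
    1 / ((nthPrime n : ℚ) * nthPrime (n + 2)) ∈ Mq :=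
  AddSubmonoid.subset_closure ⟨n, rfl⟩

lemma nonneg_of_mem_Mq {x : ℚ} (hx : x ∈ Mq) : 0 ≤ x := by
  induction hx using AddSubmonoid.closure_induction with
  | mem x hx =>
    obtain ⟨n, rfl⟩ := hx
    have := nthPrime_pos n
    have := nthPrime_pos (n + 2)
    positivity
  | zero => exact le_rfl
  | add x y _ _ hx hy => exact add_nonneg hx hy

lemma one_div_nthPrime_mem_Mq (n : ℕ) : 1 / (nthPrime n : ℚ) ∈ Mq := by
  have h := Mq.nsmul_mem (one_div_mul_nthPrime_mem_Mq n) (nthPrime (n + 2))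
  have := (nthPrime_pos (n + 2)).ne'
  rwa [nsmul_eq_mul, mul_one_div, mul_comm (nthPrime n : ℚ), ← div_div, div_self this] at h

lemma one_div_nthPrime_eq_add (n : ℕ) :
    1 / (nthPrime n : ℚ) = 1 / nthPrime (n + 2) +
      (nthPrime (n + 2) - nthPrime n) • (1 / ((nthPrime n : ℚ) * nthPrime (n + 2))) := by
  have hle : nthPrime n ≤ nthPrime (n + 2) := (nthPrime_strictMono (by omega)).le
  have := (nthPrime_pos n).ne'
  have := (nthPrime_pos (n + 2)).ne'
  rw [nsmul_eq_mul, Nat.cast_sub hle]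
  field_simp
  ring

lemma dvd_one_div_nthPrime (n : ℕ) :
    ∃ c ∈ Mq, 1 / (nthPrime n : ℚ) = 1 / nthPrime (n + 2) + c :=
  ⟨_, Mq.nsmul_mem (one_div_mul_nthPrime_mem_Mq n) _, one_div_nthPrime_eq_add n⟩

lemma cosetQ_one_div_nthPrime_ssubset (n : ℕ) :
    cosetQ Mq (1 / (nthPrime n : ℚ)) ⊆ cosetQ Mq (1 / (nthPrime (n + 2) : ℚ)) ∧
      cosetQ Mq (1 / (nthPrime n : ℚ)) ≠ cosetQ Mq (1 / (nthPrime (n + 2) : ℚ)) := by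
  obtain ⟨c, hc, hdvd⟩ := dvd_one_div_nthPrime n
  refine ⟨hdvd ▸ cosetQ_add_subset hc, fun h => ?_⟩
  have hlt : (nthPrime n : ℚ) < nthPrime (n + 2) := by
    exact_mod_cast nthPrime_strictMono (by omega : n < n + 2)
  exact (one_div_lt_one_div_of_lt (nthPrime_pos n) hlt).ne' (cosetQ_injective (fun _ => nonneg_of_mem_Mq) h)

lemma not_ACCPQat_one_div_nthPrime (s : ℕ) : ¬ ACCPQat Mq (1 / (nthPrime s : ℚ)) := by
  have hstep (n : ℕ) := cosetQ_one_div_nthPrime_ssubset (s + 2 * n)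
  simpa using not_ACCPQat_of_strictChain (f := fun n => 1 / (nthPrime (s + 2 * n) : ℚ))
    (fun n => one_div_nthPrime_mem_Mq _) (fun n => (hstep n).1) (fun n => (hstep n).2)

theorem stmt8 :
    (∀ n : ℕ, ∃ c ∈ Mq, (1 : ℚ) / (nthPrime n : ℚ) = 1 / (nthPrime (n + 2) : ℚ) + c) ∧
    ((1 : ℚ) / 2 ∈ Mq ∧ (1 : ℚ) / 3 ∈ Mq) ∧
    (∀ n : ℕ, cosetQ Mq (1 / (nthPrime (2 * n) : ℚ)) ⊆
        cosetQ Mq (1 / (nthPrime (2 * (n + 1)) : ℚ)) ∧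
      cosetQ Mq (1 / (nthPrime (2 * n) : ℚ)) ≠
        cosetQ Mq (1 / (nthPrime (2 * (n + 1)) : ℚ))) ∧
    (∀ n : ℕ, cosetQ Mq (1 / (nthPrime (2 * n + 1) : ℚ)) ⊆
        cosetQ Mq (1 / (nthPrime (2 * (n + 1) + 1) : ℚ)) ∧
      cosetQ Mq (1 / (nthPrime (2 * n + 1) : ℚ)) ≠
        cosetQ Mq (1 / (nthPrime (2 * (n + 1) + 1) : ℚ))) ∧
    ¬ ACCPQat Mq ((1 : ℚ) / 2) ∧ ¬ ACCPQat Mq ((1 : ℚ) / 3) := by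
  have h2 := one_div_nthPrime_mem_Mq 0
  have h3 := one_div_nthPrime_mem_Mq 1
  have hn2 := not_ACCPQat_one_div_nthPrime 0
  have hn3 := not_ACCPQat_one_div_nthPrime 1
  rw [nthPrime_zero] at h2 hn2
  rw [nthPrime_one] at h3 hn3
  refine ⟨dvd_one_div_nthPrime, ⟨mod_cast h2, mod_cast h3⟩, fun n => ?_, fun n => ?_,
    mod_cast hn2, mod_cast hn3⟩
  · exact cosetQ_one_div_nthPrime_ssubset (2 * n)
  · exact cosetQ_one_div_nthPrime_ssubset (2 * n + 1)
end

section
/- Let (R_γ)_{γ∈Γ} be a directed family of integral domains (indexed by a nonempty directed poset) such that R_α ⊆ R_β is an inert extension whenever α ⪯ β. If each R_γ is a weak-ACCP domain, then the directed union ⋃_γ R_γ is a weak-ACCP domain. -/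
def ACCPat {R : Type*} [CommRing R] (r : R) : Prop :=
  ∀ f : ℕ → R, f 0 = r → (∀ n, f (n + 1) ∣ f n) →
    ∃ N, ∀ n, N ≤ n → Ideal.span {f n} = Ideal.span {f N}

def AtomicDom (R : Type*) [CommRing R] : Prop :=
  ∀ r : R, r ≠ 0 → ¬ IsUnit r → ∃ l : Multiset R, (∀ a ∈ l, Irreducible a) ∧ l.prod = r

def WeakACCPDom (R : Type*) [CommRing R] : Prop :=
  AtomicDom R ∧ ∀ S : Finset R, S.Nonempty → (∀ s ∈ S, s ≠ (0 : R)) →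
    ∃ d : R, (∀ s ∈ S, d ∣ s) ∧ ∃ s ∈ S, ∃ c, s = d * c ∧ ACCPat c

/-!
Every element of the union `U` already lies in some `R γ`, and directedness makes each
`R γ ⊆ U` inert. Along an inert extension `A ⊆ B`, a factorisation `a = x * y` in `B` can be
rescaled by a unit of `B` into a factorisation in `A`. Hence atoms of `A` stay atoms or become
units in `B`, and every divisor chain in `B` starting at an element of `A` is, up to
associates, a divisor chain in `A`, so ACCP at an element passes from `A` to `B`. Both
conditions of weak-ACCP for a finite set of `U` can therefore be checked in a single `R γ`.
-/

theorem Ideal.span_singleton_eq_span_singleton_iff_dvd_dvd {α : Type*} [CommSemiring α]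
    {x y : α} : Ideal.span {x} = Ideal.span {y} ↔ x ∣ y ∧ y ∣ x := by
  rw [le_antisymm_iff, Ideal.span_singleton_le_span_singleton,
    Ideal.span_singleton_le_span_singleton, and_comm]

theorem Multiset.exists_irreducible_prod_eq {M : Type*} [CommMonoid M] (l : Multiset M)
    (hl : ∀ a ∈ l, IsUnit a ∨ Irreducible a) (hnu : ¬IsUnit l.prod) :
    ∃ l' : Multiset M, (∀ a ∈ l', Irreducible a) ∧ l'.prod = l.prod := by
  induction l using Multiset.induction_on with
  | empty => simp at hnu
  | cons a t ih =>
    rw [Multiset.prod_cons] at hnu ⊢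
    have ht : ∀ b ∈ t, IsUnit b ∨ Irreducible b := fun b hb => hl b (mem_cons_of_mem hb)
    by_cases htu : IsUnit t.prod
    · have ha : Irreducible a :=
        (hl a (mem_cons_self a t)).resolve_left fun ha => hnu (ha.mul htu)
      exact ⟨{a * t.prod}, by simpa [irreducible_mul_isUnit htu] using ha, by simp⟩
    obtain ⟨l', hl'irr, hl'prod⟩ := ih ht htu
    rcases hl a (mem_cons_self a t) with ha | ha
    · obtain ⟨b, l'', rfl⟩ : ∃ b l'', l' = b ::ₘ l'' := by
        obtain ⟨b, hb⟩ := exists_mem_of_ne_zero (s := l') fun h => htu (by simp [← hl'prod, h])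
        exact ⟨b, exists_cons_of_mem hb⟩
      refine ⟨(a * b) ::ₘ l'', fun c hc => ?_, ?_⟩
      · rcases mem_cons.1 hc with rfl | hc
        · exact (irreducible_isUnit_mul ha).2 (hl'irr b (mem_cons_self b l''))
        · exact hl'irr c (mem_cons_of_mem hc)
      · rw [← hl'prod, prod_cons, prod_cons, mul_assoc]
    · refine ⟨a ::ₘ l', fun c hc => ?_, by rw [prod_cons, hl'prod]⟩
      rcases mem_cons.1 hc with rfl | hc
      exacts [ha, hl'irr c hc]

def Subring.IsInert {T : Type*} [CommRing T] (A B : Subring T) : Prop :=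
  ∀ x y : T, x ∈ B → y ∈ B → x ≠ 0 → y ≠ 0 → x * y ∈ A →
    ∃ u v : T, u ∈ B ∧ v ∈ B ∧ u * v = 1 ∧ u * x ∈ A ∧ v * y ∈ A

namespace Subring.IsInert

variable {T : Type*} [CommRing T] {A B : Subring T}

theorem exists_units_of_inclusion_eq_mul (hi : A.IsInert B) (hAB : A ≤ B) {a : A} {x y : B}
    (hx : x ≠ 0) (hy : y ≠ 0) (h : inclusion hAB a = x * y) :
    ∃ (u : Bˣ) (a₁ a₂ : A), a = a₁ * a₂ ∧
      inclusion hAB a₁ = u * x ∧ inclusion hAB a₂ = ↑u⁻¹ * y := by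
  have haT : (a : T) = x * y := congrArg Subtype.val h
  obtain ⟨u, v, hu, hv, huv, hux, hvy⟩ :=
    hi x y x.2 y.2 (by simpa using hx) (by simpa using hy) (haT ▸ a.2)
  let w : Bˣ := ⟨⟨u, hu⟩, ⟨v, hv⟩, Subtype.ext huv, Subtype.ext (by rw [mul_comm]; exact huv)⟩
  refine ⟨w, ⟨u * x, hux⟩, ⟨v * y, hvy⟩, Subtype.ext ?_, rfl, rfl⟩
  change (a : T) = u * x * (v * y)
  linear_combination haT - (x : T) * y * huv

theorem irreducible_inclusion (hi : A.IsInert B) (hAB : A ≤ B) {a : A} (ha : Irreducible a)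
    (hu : ¬IsUnit (inclusion hAB a)) : Irreducible (inclusion hAB a) := by
  have ha0 : inclusion hAB a ≠ 0 := (map_ne_zero_iff _ (inclusion_injective hAB)).2 ha.ne_zero
  refine ⟨hu, fun x y hxy => ?_⟩
  have hx : x ≠ 0 := left_ne_zero_of_mul (hxy ▸ ha0)
  have hy : y ≠ 0 := right_ne_zero_of_mul (hxy ▸ ha0)
  obtain ⟨w, a₁, a₂, rfl, hx₁, hy₂⟩ := hi.exists_units_of_inclusion_eq_mul hAB hx hy hxy
  rcases ha.isUnit_or_isUnit rfl with h | h
  · left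
    simpa [hx₁] using h.map (inclusion hAB)
  · right
    simpa [hy₂] using h.map (inclusion hAB)

theorem accPat_inclusion (hi : A.IsInert B) (hAB : A ≤ B) {c : A} (hc : c ≠ 0)
    (hacc : ACCPat c) : ACCPat (inclusion hAB c) := by
  intro f hf0 hf
  have hf_ne_zero : ∀ n, f n ≠ 0 := by
    intro n
    induction n with
    | zero => rw [hf0]; exact (map_ne_zero_iff _ (inclusion_injective hAB)).2 hc
    | succ n ih => exact fun h => ih (zero_dvd_iff.1 (h ▸ hf n))
  have step : ∀ n (g : {g : A // Associated (inclusion hAB g) (f n)}),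
      ∃ g' : {g' : A // Associated (inclusion hAB g') (f (n + 1))}, g'.1 ∣ g.1 := by
    rintro n ⟨g, hg⟩
    obtain ⟨w, hw⟩ := (hf n).trans hg.symm.dvd
    have hw0 : w ≠ 0 := right_ne_zero_of_mul (hw ▸ hg.ne_zero_iff.2 (hf_ne_zero n))
    obtain ⟨u, a₁, a₂, rfl, h₁, -⟩ :=
      hi.exists_units_of_inclusion_eq_mul hAB (hf_ne_zero (n + 1)) hw0 hw
    exact ⟨⟨a₁, h₁ ▸ associated_unit_mul_left _ _ u.isUnit⟩, dvd_mul_right a₁ a₂⟩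
  choose next hnext using step
  let G : ∀ n, {g : A // Associated (inclusion hAB g) (f n)} :=
    fun n => Nat.rec ⟨c, hf0 ▸ Associated.refl _⟩ next n
  obtain ⟨N, hN⟩ := hacc (fun n => (G n).1) rfl (fun n => hnext n (G n))
  refine ⟨N, fun n hn => ?_⟩
  obtain ⟨h₁, h₂⟩ := Ideal.span_singleton_eq_span_singleton_iff_dvd_dvd.1 (hN n hn)
  exact Ideal.span_singleton_eq_span_singleton_iff_dvd_dvd.2
    ⟨(G n).2.symm.dvd.trans ((map_dvd _ h₁).trans (G N).2.dvd),
      (G N).2.symm.dvd.trans ((map_dvd _ h₂).trans (G n).2.dvd)⟩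

theorem exists_irreducible_factors (hi : A.IsInert B) (hAB : A ≤ B) (hA : AtomicDom A)
    {b : B} (hb : (b : T) ∈ A) (hb0 : b ≠ 0) (hbu : ¬IsUnit b) :
    ∃ l : Multiset B, (∀ x ∈ l, Irreducible x) ∧ l.prod = b := by
  let a : A := ⟨b, hb⟩
  have hab : inclusion hAB a = b := rfl
  obtain ⟨l, hl, hlprod⟩ := hA a ((map_ne_zero_iff _ (inclusion_injective hAB)).1 hb0)
    fun h => hbu (hab ▸ h.map (inclusion hAB))
  have hprod : (l.map (inclusion hAB)).prod = b := by rw [← map_multiset_prod, hlprod, hab]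
  have hunit_or_irr : ∀ x ∈ l.map (inclusion hAB), IsUnit x ∨ Irreducible x := by
    intro x hx
    obtain ⟨a', ha', rfl⟩ := Multiset.mem_map.1 hx
    exact (em _).imp_right (hi.irreducible_inclusion hAB (hl a' ha'))
  obtain ⟨l', hl', hl'prod⟩ := (l.map (inclusion hAB)).exists_irreducible_prod_eq
    hunit_or_irr (hprod ▸ hbu)
  exact ⟨l', hl', hl'prod.trans hprod⟩

theorem exists_accPat_cofactor (hi : A.IsInert B) (hAB : A ≤ B) (hA : WeakACCPDom A)
    (S : Finset B) (hSA : ∀ s ∈ S, (s : T) ∈ A) (hS : S.Nonempty) (hS0 : ∀ s ∈ S, s ≠ 0) :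
    ∃ d : B, (∀ s ∈ S, d ∣ s) ∧ ∃ s ∈ S, ∃ c, s = d * c ∧ ACCPat c := by
  let S₀ : Finset A := S.preimage (inclusion hAB) (inclusion_injective hAB).injOn
  have hS₀ : ∀ s ∈ S, ∃ a ∈ S₀, inclusion hAB a = s :=
    fun s hs => ⟨⟨s, hSA s hs⟩, Finset.mem_preimage.2 hs, rfl⟩
  have hS₀ne : S₀.Nonempty := by
    obtain ⟨s, hs⟩ := hS
    obtain ⟨a, ha, -⟩ := hS₀ s hs
    exact ⟨a, ha⟩
  have hS₀0 : ∀ a ∈ S₀, a ≠ 0 :=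
    fun a ha h => hS0 _ (Finset.mem_preimage.1 ha) (by rw [h, map_zero])
  obtain ⟨d, hd, a, ha, c, rfl, hc⟩ := hA.2 S₀ hS₀ne hS₀0
  refine ⟨inclusion hAB d, fun s hs => ?_, inclusion hAB (d * c), Finset.mem_preimage.1 ha,
    inclusion hAB c, map_mul _ _ _, hi.accPat_inclusion hAB (right_ne_zero_of_mul (hS₀0 _ ha)) hc⟩
  obtain ⟨a', ha', rfl⟩ := hS₀ s hs
  exact map_dvd _ (hd a' ha')

end Subring.IsInert

section DirectedUnion

variable {T : Type*} [CommRing T] {Γ : Type*} {R : Γ → Subring T} {U : Subring T}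

theorem le_of_coe_eq_iUnion (hU : (U : Set T) = ⋃ γ, (R γ : Set T)) (γ : Γ) : R γ ≤ U :=
  SetLike.coe_subset_coe.1 (hU ▸ Set.subset_iUnion (fun γ => (R γ : Set T)) γ)

theorem exists_mem_of_coe_eq_iUnion (hU : (U : Set T) = ⋃ γ, (R γ : Set T)) {x : T}
    (hx : x ∈ U) : ∃ γ, x ∈ R γ :=
  Set.mem_iUnion.1 (hU ▸ hx)

theorem exists_forall_mem_of_coe_eq_iUnion [Preorder Γ] [IsDirectedOrder Γ] [Nonempty Γ]
    (hmono : Monotone R)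
    (hU : (U : Set T) = ⋃ γ, (R γ : Set T)) (S : Finset U) : ∃ γ, ∀ s ∈ S, (s : T) ∈ R γ := by
  classical
  choose idx hidx using fun s : U => exists_mem_of_coe_eq_iUnion hU s.2
  obtain ⟨γ, hγ⟩ := (S.image idx).exists_le
  exact ⟨γ, fun s hs => hmono (hγ _ (Finset.mem_image_of_mem idx hs)) (hidx s)⟩

theorem isInert_of_coe_eq_iUnion [Preorder Γ] [IsDirectedOrder Γ] (hmono : Monotone R)
    (hinert : ∀ {α β : Γ}, α ≤ β → (R α).IsInert (R β))
    (hU : (U : Set T) = ⋃ γ, (R γ : Set T)) (γ : Γ) : (R γ).IsInert U := by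
  intro x y hx hy hx0 hy0 hxy
  obtain ⟨α, hxα⟩ := exists_mem_of_coe_eq_iUnion hU hx
  obtain ⟨β, hyβ⟩ := exists_mem_of_coe_eq_iUnion hU hy
  obtain ⟨θ₁, hγθ₁, hαθ₁⟩ := exists_ge_ge γ α
  obtain ⟨θ, hθ₁θ, hβθ⟩ := exists_ge_ge θ₁ β
  obtain ⟨u, v, hu, hv, huv, hux, hvy⟩ := hinert (hγθ₁.trans hθ₁θ) x y
    (hmono (hαθ₁.trans hθ₁θ) hxα) (hmono hβθ hyβ) hx0 hy0 hxy
  exact ⟨u, v, le_of_coe_eq_iUnion hU θ hu, le_of_coe_eq_iUnion hU θ hv, huv, hux, hvy⟩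

end DirectedUnion

theorem stmt11_general {T : Type*} [CommRing T]
    {Γ : Type*} [Nonempty Γ] [Preorder Γ]
    (hdir : ∀ α β : Γ, ∃ θ : Γ, α ≤ θ ∧ β ≤ θ)
    (R : Γ → Subring T) (hmono : ∀ {α β : Γ}, α ≤ β → R α ≤ R β)
    -- each extension `R α ⊆ R β` is inert
    (hinert : ∀ {α β : Γ}, α ≤ β → ∀ x y : T, x ∈ R β → y ∈ R β → x ≠ 0 → y ≠ 0 →
      x * y ∈ R α → ∃ u v : T, u ∈ R β ∧ v ∈ R β ∧ u * v = 1 ∧ u * x ∈ R α ∧ v * y ∈ R α)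
    (hwa : ∀ γ : Γ, WeakACCPDom (R γ))
    (U : Subring T) (hU : (U : Set T) = ⋃ γ : Γ, (R γ : Set T)) :
    WeakACCPDom U := by
  have : IsDirectedOrder Γ := ⟨hdir⟩
  have hRU := le_of_coe_eq_iUnion hU
  have hinertU := isInert_of_coe_eq_iUnion (fun _ _ h => hmono h) (fun h => hinert h) hU
  refine ⟨fun b hb0 hbu => ?_, fun S hS hS0 => ?_⟩
  · obtain ⟨γ, hγ⟩ := exists_mem_of_coe_eq_iUnion hU b.2
    exact (hinertU γ).exists_irreducible_factors (hRU γ) (hwa γ).1 hγ hb0 hbu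
  · obtain ⟨γ, hγ⟩ := exists_forall_mem_of_coe_eq_iUnion (fun _ _ h => hmono h) hU S
    exact (hinertU γ).exists_accPat_cofactor (hRU γ) (hwa γ) S hγ hS hS0

theorem stmt11 {T : Type*} [CommRing T] [IsDomain T]
    {Γ : Type*} [Nonempty Γ] [Preorder Γ]
    (hdir : ∀ α β : Γ, ∃ θ : Γ, α ≤ θ ∧ β ≤ θ)
    (R : Γ → Subring T) (hmono : ∀ {α β : Γ}, α ≤ β → R α ≤ R β)
    -- each extension `R α ⊆ R β` is inert
    (hinert : ∀ {α β : Γ}, α ≤ β → ∀ x y : T, x ∈ R β → y ∈ R β → x ≠ 0 → y ≠ 0 →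
      x * y ∈ R α → ∃ u v : T, u ∈ R β ∧ v ∈ R β ∧ u * v = 1 ∧ u * x ∈ R α ∧ v * y ∈ R α)
    (hwa : ∀ γ : Γ, WeakACCPDom (R γ))
    (U : Subring T) (hU : (U : Set T) = ⋃ γ : Γ, (R γ : Set T)) :
    WeakACCPDom U :=
  stmt11_general hdir R hmono hinert hwa U hU
end
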